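/- arXiv:math/0604215 — 5 statements merged into one kernel-verified Lean document; each statement's English description precedes it below -/
import Mathlib

section
/- Let B and D be nonnegative random variables (possibly taking the value infinity) with E[min{B,D}] < ∞, and let λ > 0 with λE[B·1_{D=∞}] < 1 and λE[B] > 1. Then the equation z = λE[min{zB, D}] has a unique solution z in (0,∞). -/
open MeasureTheory ENNReal

/-!
With `H a = E[min{B, a D}]`, a positive finite `z` solves the equation iff `H (1 / z) = λ⁻¹`.
By dominated and monotone convergence `H` is continuous on `(0, ∞)`, with `H (0+) = E[B 1_{D=∞}]`
and `H (∞) = E[B]`, so the intermediate value theorem gives a solution. If `H a = H b` with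
`a < b` and `H a < ∞`, then `min{B, a D} = min{B, b D}` a.s., which forces `B ≤ a D` a.s. (as
`D > 0`) and hence `H a = E[B]`; thus `H` is strictly increasing below `E[B]`, and `λ⁻¹ < E[B]`
gives uniqueness.
-/

open Filter Set Topology

namespace ENNReal

theorem mul_lt_mul_right_of_ne_top {u v d : ℝ≥0∞} (huv : u < v) (hd : d ≠ 0) (hud : u * d ≠ ⊤) :
    u * d < v * d := by
  rcases eq_or_ne d ⊤ with rfl | hdt
  · obtain rfl : u = 0 := by simpa [mul_top'] using hud
    simp [mul_top huv.ne']
  · exact ENNReal.mul_lt_mul_left hd hdt huv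

theorem le_mul_of_min_mul_eq_min_mul {b d u v : ℝ≥0∞} (huv : u < v) (hd : d ≠ 0)
    (h : min b (u * d) = min b (v * d)) : b ≤ u * d := by
  by_contra! hlt
  have hud : u * d = min b (v * d) := (min_eq_right hlt.le).symm.trans h
  exact (lt_min hlt (mul_lt_mul_right_of_ne_top huv hd (ne_top_of_lt hlt))).ne hud

theorem min_mul_le_mul_min {b d u c : ℝ≥0∞} (hc : 1 ≤ c) (hu : u ≤ c) :
    min b (u * d) ≤ c * min b d := by
  rw [mul_min]
  exact min_le_min (le_mul_of_one_le_left' hc) (by gcongr)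

theorem tendsto_min_mul_nhdsGT_zero (b d : ℝ≥0∞) :
    Tendsto (fun u => min b (u * d)) (𝓝[>] 0) (𝓝 (if d = ⊤ then b else 0)) := by
  split_ifs with hd
  · refine tendsto_const_nhds.congr' (eventually_nhdsWithin_of_forall fun u (hu : 0 < u) => ?_)
    dsimp only
    rw [hd, mul_top (ne_of_gt hu), min_top_right]
  · have h := (tendsto_const_nhds (x := b)).min
      (ENNReal.continuousAt_mul_const (a := d) (b := 0) (Or.inl hd))
    simpa using tendsto_nhdsWithin_of_tendsto_nhds h

end ENNReal

section

variable {Ω : Type*} [MeasurableSpace Ω] {μ : Measure Ω} {B D : Ω → ℝ≥0∞}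

noncomputable def lintegralMinMul (μ : Measure Ω) (B D : Ω → ℝ≥0∞) (a : ℝ≥0∞) : ℝ≥0∞ :=
  ∫⁻ ω, min (B ω) (a * D ω) ∂μ

theorem lintegral_min_mul_eq_mul_lintegralMinMul {z : ℝ≥0∞} (hz0 : z ≠ 0) (hzt : z ≠ ⊤) :
    ∫⁻ ω, min (z * B ω) (D ω) ∂μ = z * lintegralMinMul μ B D z⁻¹ := by
  rw [lintegralMinMul, ← lintegral_const_mul' _ _ hzt]
  congr with ω
  rw [mul_min, ← mul_assoc, ENNReal.mul_inv_cancel hz0 hzt, one_mul]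

theorem monotone_lintegralMinMul : Monotone (lintegralMinMul μ B D) :=
  fun _ _ huv => lintegral_mono fun _ => by gcongr

theorem eq_mul_lintegral_min_mul_iff {z l : ℝ≥0∞} (hz0 : z ≠ 0) (hzt : z ≠ ⊤) (hl0 : l ≠ 0)
    (hlt : l ≠ ⊤) :
    z = l * ∫⁻ ω, min (z * B ω) (D ω) ∂μ ↔ lintegralMinMul μ B D z⁻¹ = l⁻¹ := by
  rw [lintegral_min_mul_eq_mul_lintegralMinMul hz0 hzt, mul_left_comm]
  nth_rewrite 1 [← mul_one z]
  rw [ENNReal.mul_right_inj hz0 hzt]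
  exact ⟨fun h => ENNReal.eq_inv_of_mul_eq_one_left (by rw [mul_comm, h]),
    fun h => by rw [h, ENNReal.mul_inv_cancel hl0 hlt]⟩

variable (hB : Measurable B) (hD : Measurable D)
include hB hD

theorem measurable_min_mul (a : ℝ≥0∞) : Measurable fun ω => min (B ω) (a * D ω) :=
  hB.min (hD.const_mul a)

theorem continuousAt_lintegralMinMul (hmin : ∫⁻ ω, min (B ω) (D ω) ∂μ ≠ ⊤) {a : ℝ≥0∞}
    (ha0 : a ≠ 0) (hat : a ≠ ⊤) : ContinuousAt (lintegralMinMul μ B D) a := by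
  have hlt : a < a + 1 := lt_add_right hat one_ne_zero
  refine tendsto_lintegral_filter_of_dominated_convergence (fun ω => (a + 1) * min (B ω) (D ω))
    (Eventually.of_forall (measurable_min_mul hB hD)) ?_ ?_ ?_
  · filter_upwards [eventually_lt_nhds hlt] with u hu
    exact Eventually.of_forall fun ω => min_mul_le_mul_min le_add_self hu.le
  · rw [lintegral_const_mul' _ _ (add_ne_top.2 ⟨hat, one_ne_top⟩)]
    exact mul_ne_top (add_ne_top.2 ⟨hat, one_ne_top⟩) hmin
  · exact Eventually.of_forall fun ω =>
      tendsto_const_nhds.min (ENNReal.continuousAt_mul_const (Or.inr ha0))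

theorem tendsto_lintegralMinMul_nhdsGT_zero (hmin : ∫⁻ ω, min (B ω) (D ω) ∂μ ≠ ⊤) :
    Tendsto (lintegralMinMul μ B D) (𝓝[>] 0) (𝓝 (∫⁻ ω in {ω | D ω = ⊤}, B ω ∂μ)) := by
  have hDtop : MeasurableSet {ω | D ω = ⊤} := hD (measurableSet_singleton ⊤)
  rw [← lintegral_indicator hDtop]
  refine tendsto_lintegral_filter_of_dominated_convergence (fun ω => min (B ω) (D ω))
    (Eventually.of_forall (measurable_min_mul hB hD)) ?_ hmin
    (Eventually.of_forall fun ω => ?_)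
  · filter_upwards [Ioo_mem_nhdsGT zero_lt_one] with u hu
    exact Eventually.of_forall fun ω => by
      simpa using min_mul_le_mul_min (b := B ω) (d := D ω) le_rfl hu.2.le
  · simpa [indicator_apply] using tendsto_min_mul_nhdsGT_zero (B ω) (D ω)

theorem tendsto_lintegralMinMul_natCast_atTop (hD0 : ∀ᵐ ω ∂μ, D ω ≠ 0) :
    Tendsto (fun n : ℕ => lintegralMinMul μ B D n) atTop (𝓝 (∫⁻ ω, B ω ∂μ)) := by
  refine lintegral_tendsto_of_tendsto_of_monotone
    (fun n => (measurable_min_mul hB hD n).aemeasurable)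
    (Eventually.of_forall fun ω m n hmn => by dsimp only; gcongr) ?_
  filter_upwards [hD0] with ω hω
  have h := ENNReal.Tendsto.mul_const (b := D ω) tendsto_nat_nhds_top (Or.inl top_ne_zero)
  simpa [top_mul hω] using tendsto_const_nhds.min h

theorem exists_lintegralMinMul_eq (hD0 : ∀ᵐ ω ∂μ, D ω ≠ 0)
    (hmin : ∫⁻ ω, min (B ω) (D ω) ∂μ ≠ ⊤) {c : ℝ≥0∞}
    (hc_gt : ∫⁻ ω in {ω | D ω = ⊤}, B ω ∂μ < c) (hc_lt : c < ∫⁻ ω, B ω ∂μ) :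
    ∃ a ∈ Ioo 0 ⊤, lintegralMinMul μ B D a = c := by
  have : (𝓝[>] (0 : ℝ≥0∞)).NeBot := nhdsGT_neBot_of_exists_gt ⟨1, zero_lt_one⟩
  obtain ⟨a, hac, ha⟩ := (((tendsto_lintegralMinMul_nhdsGT_zero hB hD hmin).eventually
    (eventually_lt_nhds hc_gt)).and (Ioo_mem_nhdsGT zero_lt_one)).exists
  obtain ⟨n, hnc, hn⟩ := (((tendsto_lintegralMinMul_natCast_atTop hB hD hD0).eventually
    (eventually_gt_nhds hc_lt)).and (eventually_ge_atTop 1)).exists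
  refine isPreconnected_Ioo.intermediate_value ⟨ha.1, ha.2.trans one_lt_top⟩
    ⟨Nat.cast_pos.2 hn, natCast_lt_top n⟩ (fun x hx => ?_) ⟨hac.le, hnc.le⟩
  exact (continuousAt_lintegralMinMul hB hD hmin hx.1.ne' hx.2.ne).continuousWithinAt

theorem strictMonoOn_lintegralMinMul (hD0 : ∀ᵐ ω ∂μ, D ω ≠ 0) :
    StrictMonoOn (lintegralMinMul μ B D) {a | lintegralMinMul μ B D a < ∫⁻ ω, B ω ∂μ} := by
  intro u (hu : lintegralMinMul μ B D u < _) v _ huv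
  refine lt_of_le_of_ne (monotone_lintegralMinMul huv.le) fun heq => hu.ne ?_
  have hae : (fun ω => min (B ω) (u * D ω)) =ᵐ[μ] fun ω => min (B ω) (v * D ω) :=
    ae_eq_of_ae_le_of_lintegral_le (Eventually.of_forall fun ω => by dsimp only; gcongr)
      (ne_top_of_lt hu) (measurable_min_mul hB hD v).aemeasurable heq.ge
  refine lintegral_congr_ae ?_
  filter_upwards [hae, hD0] with ω h hω
  exact min_eq_left (le_mul_of_min_mul_eq_min_mul huv hω h)

end

theorem fixed_point_equation_unique_solution_general
    {Ω : Type*} [MeasurableSpace Ω] (μ : Measure Ω)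
    (B D : Ω → ℝ≥0∞) (hB : Measurable B) (hD : Measurable D)
    (hpos : ∀ᵐ ω ∂μ, 0 < B ω ∧ 0 < D ω ∧ (B ω ≠ ⊤ ∨ D ω ≠ ⊤))
    (l : ℝ≥0∞) (hltop : l ≠ ⊤)
    (hmin : ∫⁻ ω, min (B ω) (D ω) ∂μ ≠ ⊤)
    (hsub : l * ∫⁻ ω in {ω | D ω = ⊤}, B ω ∂μ < 1)
    (hsup : 1 < l * ∫⁻ ω, B ω ∂μ) :
    ∃! z : ℝ≥0∞, (0 < z ∧ z < ⊤) ∧ z = l * ∫⁻ ω, min (z * B ω) (D ω) ∂μ := by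
  have hD0 : ∀ᵐ ω ∂μ, D ω ≠ 0 := hpos.mono fun _ h => h.2.1.ne'
  have hl0 : l ≠ 0 := left_ne_zero_of_mul (zero_lt_one.trans hsup).ne'
  have hlevel_gt : ∫⁻ ω in {ω | D ω = ⊤}, B ω ∂μ < l⁻¹ := by
    rwa [← one_div, ENNReal.lt_div_iff_mul_lt (Or.inl hl0) (Or.inl hltop), mul_comm]
  have hlevel_lt : l⁻¹ < ∫⁻ ω, B ω ∂μ := by
    rwa [← one_div, ENNReal.div_lt_iff (Or.inr one_ne_zero) (Or.inr one_ne_top), mul_comm]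
  obtain ⟨u, ⟨hu0, hutop⟩, hu⟩ := exists_lintegralMinMul_eq hB hD hD0 hmin hlevel_gt hlevel_lt
  refine ⟨u⁻¹, ⟨⟨ENNReal.inv_pos.2 hutop.ne, ENNReal.inv_lt_top.2 hu0⟩, ?_⟩, ?_⟩
  · rwa [eq_mul_lintegral_min_mul_iff (ENNReal.inv_ne_zero.2 hutop.ne)
      (ENNReal.inv_ne_top.2 hu0.ne') hl0 hltop, inv_inv]
  · rintro z ⟨⟨hz0, hztop⟩, hz⟩
    rw [eq_mul_lintegral_min_mul_iff hz0.ne' hztop.ne hl0 hltop] at hz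
    have hzu : z⁻¹ = u := (strictMonoOn_lintegralMinMul hB hD hD0).injOn
      (show _ < _ from hz ▸ hlevel_lt) (show _ < _ from hu ▸ hlevel_lt) (hz.trans hu.symm)
    rw [← hzu, inv_inv]

/-- The fixed point equation `z = λ E[min{z B, D}]` has a unique solution in `(0, ∞)`
provided `λ E[B 1_{D=∞}] < 1 < λ E[B]` and `E[min{B,D}] < ∞`. -/
theorem fixed_point_equation_unique_solution
    {Ω : Type*} [MeasurableSpace Ω] (μ : Measure Ω) [IsProbabilityMeasure μ]
    (B D : Ω → ℝ≥0∞) (hB : Measurable B) (hD : Measurable D)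
    (hpos : ∀ᵐ ω ∂μ, 0 < B ω ∧ 0 < D ω ∧ (B ω ≠ ⊤ ∨ D ω ≠ ⊤))
    (l : ℝ≥0∞) (hl0 : 0 < l) (hltop : l ≠ ⊤)
    (hmin : ∫⁻ ω, min (B ω) (D ω) ∂μ ≠ ⊤)
    (hsub : l * ∫⁻ ω in {ω | D ω = ⊤}, B ω ∂μ < 1)
    (hsup : 1 < l * ∫⁻ ω, B ω ∂μ) :
    ∃! z : ℝ≥0∞, (0 < z ∧ z < ⊤) ∧ z = l * ∫⁻ ω, min (z * B ω) (D ω) ∂μ :=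
  fixed_point_equation_unique_solution_general μ B D hB hD hpos l hltop hmin hsub hsup
end

section
/- Suppose (B,D) are independent, P(D ≥ t) = e^{−νt}, and z∞ > 0 satisfies ρβ*(z∞ν) = 1 where β*(s) = E[e^{−sB*}] and B* has density P(B ≥ x)/E[B]. Then the function z(t) = z∞(1 − e^{−νt}) satisfies z(t) = λ∫₀ᵗ P(D ≥ t−s)·P(B ≥ ∫ₛᵗ (1/z(u))du) ds for all t ≥ 0. -/
/-! The function `F u = (z∞ ν)⁻¹ log (e^{νu} - 1)` is a primitive of `1 / z`, so the inner
integral is `F t - F s`, which decreases from `∞` to `0` as `s` runs over `(0, t)`. Substituting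
`x = F t - F s` in the fixed-point equation `λ ∫₀^∞ e^{-z∞ν x} P(B ≥ x) dx = 1`, the Jacobian
`1 / z(s)` times `e^{-z∞ν x} = (e^{νs} - 1) / (e^{νt} - 1)` is exactly `e^{-ν(t-s)} / z(t)`. -/

open MeasureTheory ENNReal Real Set

namespace ExponentialReneging

variable {ν zoo : ℝ}

noncomputable def fluidLevel (ν zoo u : ℝ) : ℝ := zoo * (1 - exp (-ν * u))

noncomputable def potential (ν zoo u : ℝ) : ℝ := (zoo * ν)⁻¹ * Real.log (exp (ν * u) - 1)

lemma exp_mul_sub_one_pos (hν : 0 < ν) {u : ℝ} (hu : 0 < u) : 0 < exp (ν * u) - 1 :=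
  sub_pos.2 (one_lt_exp_iff.2 (mul_pos hν hu))

lemma fluidLevel_eq (u : ℝ) : fluidLevel ν zoo u = zoo * (exp (ν * u) - 1) / exp (ν * u) := by
  rw [fluidLevel, neg_mul, exp_neg]
  field_simp

lemma fluidLevel_pos (hν : 0 < ν) (hzoo : 0 < zoo) {u : ℝ} (hu : 0 < u) :
    0 < fluidLevel ν zoo u := by
  have := exp_mul_sub_one_pos hν hu
  rw [fluidLevel_eq]
  positivity

lemma hasDerivAt_potential (hν : 0 < ν) {u : ℝ} (hu : 0 < u) :
    HasDerivAt (potential ν zoo) (fluidLevel ν zoo u)⁻¹ u := by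
  have hexp : HasDerivAt (fun x ↦ exp (ν * x) - 1) (exp (ν * u) * ν) u := by
    simpa using ((hasDerivAt_id u).const_mul ν).exp.sub_const 1
  refine ((hexp.log (exp_mul_sub_one_pos hν hu).ne').const_mul (zoo * ν)⁻¹).congr_deriv ?_
  rw [fluidLevel_eq]
  field_simp

lemma strictMonoOn_potential (hν : 0 < ν) (hzoo : 0 < zoo) :
    StrictMonoOn (potential ν zoo) (Ioi 0) := fun a ha b _ hab ↦ by
  have := exp_mul_sub_one_pos hν ha
  unfold potential
  gcongr

lemma exp_mul_potential (hν : 0 < ν) (hzoo : 0 < zoo) {u : ℝ} (hu : 0 < u) :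
    exp (zoo * ν * potential ν zoo u) = exp (ν * u) - 1 := by
  rw [potential, ← mul_assoc, mul_inv_cancel₀ (by positivity), one_mul,
    exp_log (exp_mul_sub_one_pos hν hu)]

lemma potential_inv_mul_log_one_add_exp (hν : 0 < ν) (hzoo : 0 < zoo) (x : ℝ) :
    potential ν zoo (ν⁻¹ * Real.log (1 + exp (zoo * ν * x))) = x := by
  rw [potential, ← mul_assoc, mul_inv_cancel₀ hν.ne', one_mul, exp_log (by positivity),
    add_sub_cancel_left, Real.log_exp, ← mul_assoc, inv_mul_cancel₀ (by positivity), one_mul]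

lemma image_const_sub_potential_Ioo (hν : 0 < ν) (hzoo : 0 < zoo) {t : ℝ} (ht : 0 < t) :
    (fun s ↦ potential ν zoo t - potential ν zoo s) '' Ioo 0 t = Ioi 0 := by
  have hmono := strictMonoOn_potential hν hzoo
  ext x
  constructor
  · rintro ⟨s, hs, rfl⟩
    exact sub_pos.2 (hmono hs.1 (hs.1.trans hs.2) hs.2)
  · intro hx
    set s := ν⁻¹ * Real.log (1 + exp (zoo * ν * (potential ν zoo t - x)))
    have hs : 0 < s := mul_pos (inv_pos.2 hν) (Real.log_pos (lt_add_of_pos_right _ (exp_pos _)))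
    have hFs : potential ν zoo s = potential ν zoo t - x :=
      potential_inv_mul_log_one_add_exp hν hzoo _
    refine ⟨s, ⟨hs, (hmono.lt_iff_lt hs ht).1 ?_⟩, by simp only [hFs]; ring⟩
    rw [hFs]
    exact sub_lt_self _ hx

lemma fluidLevel_div_mul_exp_potential (hν : 0 < ν) (hzoo : 0 < zoo) {s t : ℝ} (hs : 0 < s)
    (ht : 0 < t) :
    fluidLevel ν zoo t / fluidLevel ν zoo s *
        exp (-(zoo * ν) * (potential ν zoo t - potential ν zoo s)) = exp (-ν * (t - s)) := by
  have hs' := exp_mul_sub_one_pos hν hs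
  have ht' := exp_mul_sub_one_pos hν ht
  rw [show -(zoo * ν) * (potential ν zoo t - potential ν zoo s) =
      zoo * ν * potential ν zoo s - zoo * ν * potential ν zoo t by ring, exp_sub,
    exp_mul_potential hν hzoo hs, exp_mul_potential hν hzoo ht, fluidLevel_eq, fluidLevel_eq,
    show -ν * (t - s) = ν * s - ν * t by ring, exp_sub]
  field_simp

lemma ofReal_fluidLevel_mul_lintegral_Ioi (hν : 0 < ν) (hzoo : 0 < zoo) {t : ℝ} (ht : 0 < t)
    (G : ℝ → ℝ≥0∞) :
    ENNReal.ofReal (fluidLevel ν zoo t) *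
        ∫⁻ x in Ioi 0, ENNReal.ofReal (exp (-(zoo * ν) * x)) * G x =
      ∫⁻ s in Ioo 0 t, ENNReal.ofReal (exp (-ν * (t - s))) *
        G (potential ν zoo t - potential ν zoo s) := by
  have hanti : AntitoneOn (fun s ↦ potential ν zoo t - potential ν zoo s) (Ioo 0 t) :=
    fun a ha b hb hab ↦ sub_le_sub_left
      ((strictMonoOn_potential hν hzoo).monotoneOn ha.1 hb.1 hab) _
  rw [← image_const_sub_potential_Ioo hν hzoo ht,
    lintegral_image_eq_lintegral_deriv_mul_of_antitoneOn measurableSet_Ioo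
      (fun s hs ↦ ((hasDerivAt_potential hν hs.1).const_sub _).hasDerivWithinAt) hanti,
    ← lintegral_const_mul' _ _ ofReal_ne_top]
  refine setLIntegral_congr_fun measurableSet_Ioo fun s hs ↦ ?_
  have hzs := fluidLevel_pos hν hzoo hs.1
  have hzt := fluidLevel_pos hν hzoo ht
  rw [neg_neg, ← mul_assoc, ← mul_assoc, ← ofReal_mul hzt.le,
    ← ofReal_mul (by positivity), ← div_eq_mul_inv,
    fluidLevel_div_mul_exp_potential hν hzoo hs.1 ht]

lemma lintegral_inv_fluidLevel (hν : 0 < ν) (hzoo : 0 < zoo) {s t : ℝ} (hs : 0 < s)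
    (hst : s ≤ t) :
    ∫⁻ u in Ioc s t, ENNReal.ofReal (fluidLevel ν zoo u)⁻¹ =
      ENNReal.ofReal (potential ν zoo t - potential ν zoo s) := by
  have hcont : ContinuousOn (fun u ↦ (fluidLevel ν zoo u)⁻¹) (Icc s t) :=
    ContinuousOn.inv₀ (by unfold fluidLevel; fun_prop)
      fun u hu ↦ (fluidLevel_pos hν hzoo (hs.trans_le hu.1)).ne'
  rw [← ofReal_integral_eq_lintegral_ofReal (hcont.integrableOn_Icc.mono_set Ioc_subset_Icc_self)
    (ae_restrict_of_forall_mem measurableSet_Ioc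
      fun u hu ↦ (inv_pos.2 (fluidLevel_pos hν hzoo (hs.trans hu.1))).le),
    ← intervalIntegral.integral_of_le hst,
    intervalIntegral.integral_eq_sub_of_hasDerivAt
      (fun u hu ↦ hasDerivAt_potential hν (hs.trans_le (uIcc_of_le hst ▸ hu).1))
      (hcont.intervalIntegrable_of_Icc hst)]

end ExponentialReneging

open ExponentialReneging

theorem exponential_reneging_fluid_solution_general
    {Ω : Type*} [MeasurableSpace Ω] (μ : Measure Ω)
    (B : Ω → ℝ≥0∞) (D : Ω → ℝ)
    (ν zoo : ℝ) (hν : 0 < ν) (hzoo : 0 < zoo)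
    (l : ℝ≥0∞)
    (hDexp : ∀ t : ℝ, 0 ≤ t → μ {ω | t ≤ D ω} = ENNReal.ofReal (Real.exp (-ν * t)))
    (hfp : l * ∫⁻ x in Set.Ioi (0 : ℝ),
        ENNReal.ofReal (Real.exp (-(zoo * ν) * x)) * μ {ω | ENNReal.ofReal x ≤ B ω} = 1) :
    ∀ t : ℝ, 0 ≤ t →
      ENNReal.ofReal (zoo * (1 - Real.exp (-ν * t))) =
        l * ∫⁻ s in Set.Ioc (0 : ℝ) t,
          μ {ω | t - s ≤ D ω} *
            μ {ω | (∫⁻ u in Set.Ioc s t,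
                ENNReal.ofReal ((zoo * (1 - Real.exp (-ν * u)))⁻¹)) ≤ B ω} := by
  intro t ht
  rcases ht.eq_or_lt with rfl | ht
  · simp
  simp only [← fluidLevel.eq_1]
  have hintegrand : ∫⁻ s in Ioc 0 t, μ {ω | t - s ≤ D ω} *
        μ {ω | ∫⁻ u in Ioc s t, ENNReal.ofReal (fluidLevel ν zoo u)⁻¹ ≤ B ω} =
      ∫⁻ s in Ioo 0 t, ENNReal.ofReal (exp (-ν * (t - s))) *
        μ {ω | ENNReal.ofReal (potential ν zoo t - potential ν zoo s) ≤ B ω} := by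
    rw [← setLIntegral_congr Ioo_ae_eq_Ioc]
    refine setLIntegral_congr_fun measurableSet_Ioo fun s hs ↦ ?_
    rw [hDexp _ (sub_nonneg.2 hs.2.le), lintegral_inv_fluidLevel hν hzoo hs.1 hs.2.le]
  rw [hintegrand, ← ofReal_fluidLevel_mul_lintegral_Ioi hν hzoo ht
    (fun x ↦ μ {ω | ENNReal.ofReal x ≤ B ω}), mul_left_comm, hfp, mul_one]

/-- Exponential reneging: if `D` is exponential with rate `ν`, independent of `B`,
and `z∞` satisfies `ρ β*(z∞ ν) = 1`, then `z(t) = z∞(1 - e^{-νt})` satisfies the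
fluid model equation `z(t) = λ ∫₀ᵗ P(D ≥ t-s) P(B ≥ ∫ₛᵗ du/z(u)) ds`. -/
theorem exponential_reneging_fluid_solution
    {Ω : Type*} [MeasurableSpace Ω] (μ : Measure Ω) [IsProbabilityMeasure μ]
    (B : Ω → ℝ≥0∞) (D : Ω → ℝ) (hB : Measurable B) (hD : Measurable D)
    (hindep : ProbabilityTheory.IndepFun B D μ)
    (hBfin : ∫⁻ ω, B ω ∂μ ≠ ⊤)
    (ν zoo : ℝ) (hν : 0 < ν) (hzoo : 0 < zoo)
    (l : ℝ≥0∞) (hl0 : 0 < l) (hltop : l ≠ ⊤)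
    (hDexp : ∀ t : ℝ, 0 ≤ t → μ {ω | t ≤ D ω} = ENNReal.ofReal (Real.exp (-ν * t)))
    (hfp : l * ∫⁻ x in Set.Ioi (0 : ℝ),
        ENNReal.ofReal (Real.exp (-(zoo * ν) * x)) * μ {ω | ENNReal.ofReal x ≤ B ω} = 1) :
    ∀ t : ℝ, 0 ≤ t →
      ENNReal.ofReal (zoo * (1 - Real.exp (-ν * t))) =
        l * ∫⁻ s in Set.Ioc (0 : ℝ) t,
          μ {ω | t - s ≤ D ω} *
            μ {ω | (∫⁻ u in Set.Ioc s t,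
                ENNReal.ofReal ((zoo * (1 - Real.exp (-ν * u)))⁻¹)) ≤ B ω} :=
  exponential_reneging_fluid_solution_general μ B D ν zoo hν hzoo l hDexp hfp
end

section
/- Under the assumptions λE[B·1_{D=∞}] < 1 and E[min{B,D}] < ∞, any fluid model solution z(·) is bounded: sup_{t≥0} z(t) < ∞. -/
/-!
While `z ≤ M` on `[0, t]`, a job that arrived at `s ≤ t` has received at least `(t - s) / M`
units of service by time `t`, so it can still be present only if `t - s < min (M B, D)`.
Integrating over arrival times, `z t ≤ z₀ + λ E[min (M B, D)] = z₀ + M λ E[min (B, D / M)]`.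
By dominated convergence `λ E[min (B, D / M)] → λ E[B; D = ∞] < 1` as `M → ∞`, so at a running
maximum `s` of `z` the bound with `M = z s` forces `z s` to stay below a fixed level.
-/

open MeasureTheory ENNReal Set Filter Topology

theorem volume_restrict_Ioi_setOf_ofReal_lt (x : ℝ≥0∞) :
    volume.restrict (Ioi 0) {u : ℝ | ENNReal.ofReal u < x} = x := by
  rw [Measure.restrict_apply' measurableSet_Ioi]
  rcases eq_or_ne x ⊤ with rfl | hx
  · simp [Real.volume_Ioi]
  · have hIoo : {u : ℝ | ENNReal.ofReal u < x} ∩ Ioi 0 = Ioo 0 x.toReal := by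
      ext u
      simp only [mem_inter_iff, mem_ofPred_eq, mem_Ioi, mem_Ioo]
      constructor
      · rintro ⟨hux, hu⟩
        exact ⟨hu, (ofReal_lt_iff_lt_toReal hu.le hx).1 hux⟩
      · rintro ⟨hu, hux⟩
        exact ⟨(ofReal_lt_iff_lt_toReal hu.le hx).2 hux, hu⟩
    rw [hIoo, Real.volume_Ioo, sub_zero, ofReal_toReal hx]

theorem lintegral_Ioi_measure_ofReal_lt {Ω : Type*} [MeasurableSpace Ω] (μ : Measure Ω)
    [SFinite μ] {X : Ω → ℝ≥0∞} (hX : Measurable X) :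
    ∫⁻ u in Ioi 0, μ {ω | ENNReal.ofReal u < X ω} = ∫⁻ ω, X ω ∂μ := by
  have hT : MeasurableSet {p : ℝ × Ω | ENNReal.ofReal p.1 < X p.2} :=
    measurableSet_lt (ENNReal.measurable_ofReal.comp measurable_fst) (hX.comp measurable_snd)
  calc ∫⁻ u in Ioi 0, μ {ω | ENNReal.ofReal u < X ω}
      = (volume.restrict (Ioi 0)).prod μ {p : ℝ × Ω | ENNReal.ofReal p.1 < X p.2} :=
        (Measure.prod_apply hT).symm
    _ = ∫⁻ ω, volume.restrict (Ioi 0) {u : ℝ | ENNReal.ofReal u < X ω} ∂μ :=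
        Measure.prod_apply_symm hT
    _ = ∫⁻ ω, X ω ∂μ := by simp only [volume_restrict_Ioi_setOf_ofReal_lt]

theorem intervalIntegral_measure_ofReal_lt_le {Ω : Type*} [MeasurableSpace Ω]
    (μ : Measure Ω) [IsFiniteMeasure μ] {X : Ω → ℝ≥0∞} (hX : Measurable X)
    (hX_fin : ∫⁻ ω, X ω ∂μ ≠ ⊤) {t : ℝ} (ht : 0 ≤ t) :
    ∫ u in 0..t, (μ {ω | ENNReal.ofReal u < X ω}).toReal ≤ (∫⁻ ω, X ω ∂μ).toReal := by
  have hanti : Antitone fun u : ℝ => μ {ω | ENNReal.ofReal u < X ω} := fun u v huv =>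
    measure_mono fun ω hω => (ofReal_le_ofReal huv).trans_lt hω
  rw [intervalIntegral.integral_of_le ht,
    integral_toReal hanti.measurable.aemeasurable (ae_of_all _ fun _ => measure_lt_top μ _)]
  refine toReal_mono hX_fin ?_
  calc ∫⁻ u in Ioc 0 t, μ {ω | ENNReal.ofReal u < X ω}
      ≤ ∫⁻ u in Ioi 0, μ {ω | ENNReal.ofReal u < X ω} := lintegral_mono_set Ioc_subset_Ioi_self
    _ = ∫⁻ ω, X ω ∂μ := lintegral_Ioi_measure_ofReal_lt μ hX

/-- The service `S(s, t)` that each job present receives during `(s, t]` under processor sharing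
at fluid level `z`. -/
noncomputable def serviceAttained (z : ℝ → ℝ) (s t : ℝ) : ℝ≥0∞ :=
  ∫⁻ u in Ioc s t, ENNReal.ofReal (z u)⁻¹

theorem ofReal_sub_le_mul_serviceAttained {z : ℝ → ℝ} {s t M : ℝ} (hM : 0 < M)
    (hz : ∀ u ∈ Ioc s t, 0 < z u ∧ z u ≤ M) :
    ENNReal.ofReal (t - s) ≤ ENNReal.ofReal M * serviceAttained z s t := by
  calc ENNReal.ofReal (t - s) = ENNReal.ofReal M * ∫⁻ _ in Ioc s t, ENNReal.ofReal M⁻¹ := by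
        rw [setLIntegral_const, Real.volume_Ioc, ← mul_assoc, ← ofReal_mul hM.le,
          mul_inv_cancel₀ hM.ne', ofReal_one, one_mul]
    _ ≤ ENNReal.ofReal M * serviceAttained z s t := by
        gcongr
        refine setLIntegral_mono' measurableSet_Ioc fun u hu => ?_
        exact ofReal_le_ofReal (inv_anti₀ (hz u hu).1 (hz u hu).2)

theorem intervalIntegral_measure_serviceAttained_lt_le {Ω : Type*} [MeasurableSpace Ω]
    (μ : Measure Ω) [IsFiniteMeasure μ] {B D : Ω → ℝ≥0∞} (hB : Measurable B)
    (hD : Measurable D) {z : ℝ → ℝ} {t M : ℝ} (ht : 0 ≤ t) (hM : 0 < M)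
    (hz : ∀ u ∈ Ioc 0 t, 0 < z u ∧ z u ≤ M)
    (h_fin : ∫⁻ ω, min (ENNReal.ofReal M * B ω) (D ω) ∂μ ≠ ⊤) :
    ∫ s in 0..t, (μ {ω | serviceAttained z s t < B ω ∧ ENNReal.ofReal (t - s) < D ω}).toReal
      ≤ (∫⁻ ω, min (ENNReal.ofReal M * B ω) (D ω) ∂μ).toReal := by
  set X : Ω → ℝ≥0∞ := fun ω => min (ENNReal.ofReal M * B ω) (D ω)
  set f : ℝ → ℝ := fun s =>
    (μ {ω | serviceAttained z s t < B ω ∧ ENNReal.ofReal (t - s) < D ω}).toReal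
  set g : ℝ → ℝ := fun s => (μ {ω | ENNReal.ofReal (t - s) < X ω}).toReal
  have hfg : ∀ s ∈ Icc 0 t, f s ≤ g s := by
    refine fun s hs => toReal_mono (measure_ne_top μ _) (measure_mono ?_)
    rintro ω ⟨hS, hDω⟩
    refine lt_min ?_ hDω
    calc ENNReal.ofReal (t - s) ≤ ENNReal.ofReal M * serviceAttained z s t :=
          ofReal_sub_le_mul_serviceAttained hM fun u hu => hz u ⟨hs.1.trans_lt hu.1, hu.2⟩
      _ < ENNReal.ofReal M * B ω :=
          ENNReal.mul_lt_mul_right (ofReal_pos.2 hM).ne' ofReal_ne_top hS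
  have hg_mono : Monotone g := fun s s' hss' =>
    toReal_mono (measure_ne_top μ _) <| measure_mono fun ω hω =>
      (ofReal_le_ofReal (by linarith)).trans_lt hω
  calc ∫ s in 0..t, f s ≤ ∫ s in 0..t, g s := by
        by_cases hf : IntervalIntegrable f volume 0 t
        · exact intervalIntegral.integral_mono_on ht hf hg_mono.intervalIntegrable hfg
        · rw [intervalIntegral.integral_undef hf]
          exact intervalIntegral.integral_nonneg ht fun s _ => toReal_nonneg
    _ = ∫ u in 0..t, (μ {ω | ENNReal.ofReal u < X ω}).toReal := by
        simpa using intervalIntegral.integral_comp_sub_left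
          (fun u => (μ {ω | ENNReal.ofReal u < X ω}).toReal) t (a := 0) (b := t)
    _ ≤ (∫⁻ ω, X ω ∂μ).toReal :=
        intervalIntegral_measure_ofReal_lt_le μ ((measurable_const.mul hB).min hD) h_fin ht

theorem min_div_ofReal_le_min (b d : ℝ≥0∞) {M : ℝ} (hM : 1 ≤ M) :
    min b (d / ENNReal.ofReal M) ≤ min b d :=
  min_le_min le_rfl (div_le_of_le_mul (le_mul_of_one_le_right' (one_le_ofReal.2 hM)))

theorem tendsto_lintegral_min_div_ofReal_atTop {Ω : Type*} [MeasurableSpace Ω]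
    (μ : Measure Ω) {B D : Ω → ℝ≥0∞} (hB : Measurable B) (hD : Measurable D)
    (h_fin : ∫⁻ ω, min (B ω) (D ω) ∂μ ≠ ⊤) :
    Tendsto (fun M : ℝ => ∫⁻ ω, min (B ω) (D ω / ENNReal.ofReal M) ∂μ) atTop
      (𝓝 (∫⁻ ω in {ω | D ω = ⊤}, B ω ∂μ)) := by
  rw [← lintegral_indicator (measurableSet_eq_fun hD measurable_const)]
  refine tendsto_lintegral_filter_of_dominated_convergence _
    (.of_forall fun M => hB.min (hD.div_const _)) ?_ h_fin (ae_of_all _ fun ω => ?_)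
  · filter_upwards [eventually_ge_atTop 1] with M hM
    exact ae_of_all _ fun ω => min_div_ofReal_le_min _ _ hM
  by_cases hDω : D ω = ⊤
  · simp [hDω, indicator_of_mem, top_div_of_ne_top]
  · have hdiv : Tendsto (fun M : ℝ => D ω / ENNReal.ofReal M) atTop (𝓝 0) := by
      simpa using ENNReal.Tendsto.const_div tendsto_ofReal_atTop (.inr hDω)
    simpa [hDω] using tendsto_const_nhds.min hdiv

theorem eventually_add_mul_lt_self {φ : ℝ → ℝ} {a : ℝ} (hφ : Tendsto φ atTop (𝓝 a))
    (ha : a < 1) (c : ℝ) : ∀ᶠ M in atTop, c + M * φ M < M := by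
  have hlim : Tendsto (fun M => c / M + φ M) atTop (𝓝 (0 + a)) :=
    (tendsto_const_nhds.div_atTop tendsto_id).add hφ
  filter_upwards [hlim.eventually_lt_const (by simpa using ha), eventually_gt_atTop 0]
    with M hlt hM
  calc c + M * φ M = M * (c / M + φ M) := by field_simp
    _ < M * 1 := mul_lt_mul_of_pos_left hlt hM
    _ = M := mul_one M

theorem fluid_le_of_forall_mem_Icc_le {Ω : Type*} [MeasurableSpace Ω] (μ : Measure Ω)
    [IsProbabilityMeasure μ] {B D B0 D0 : Ω → ℝ≥0∞} (hB : Measurable B) (hD : Measurable D)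
    {z : ℝ → ℝ} {z₀ l t M : ℝ} (hz₀ : 0 ≤ z₀) (hl : 0 ≤ l) (hz_pos : ∀ u, 0 < u → 0 < z u)
    (hzt : z t = z₀ * (μ {ω | serviceAttained z 0 t < B0 ω ∧ ENNReal.ofReal t < D0 ω}).toReal
      + l * ∫ s in 0..t,
        (μ {ω | serviceAttained z s t < B ω ∧ ENNReal.ofReal (t - s) < D ω}).toReal)
    (h_fin : ∫⁻ ω, min (B ω) (D ω) ∂μ ≠ ⊤) (ht : 0 ≤ t) (hM : 1 ≤ M)
    (hzM : ∀ u ∈ Icc 0 t, z u ≤ M) :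
    z t ≤ z₀ + M * (l * (∫⁻ ω, min (B ω) (D ω / ENNReal.ofReal M) ∂μ).toReal) := by
  have hM₀ : 0 < M := one_pos.trans_le hM
  have hscale : ∫⁻ ω, min (ENNReal.ofReal M * B ω) (D ω) ∂μ
      = ENNReal.ofReal M * ∫⁻ ω, min (B ω) (D ω / ENNReal.ofReal M) ∂μ := by
    rw [← lintegral_const_mul _ (hB.min (hD.div_const _))]
    congr with ω
    rw [mul_min, ENNReal.mul_div_cancel (ofReal_pos.2 hM₀).ne' ofReal_ne_top]
  have hφ_fin : ∫⁻ ω, min (B ω) (D ω / ENNReal.ofReal M) ∂μ ≠ ⊤ :=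
    ne_top_of_le_ne_top h_fin <| lintegral_mono fun ω => min_div_ofReal_le_min _ _ hM
  have harrivals := intervalIntegral_measure_serviceAttained_lt_le μ hB hD ht hM₀
    (fun u hu => ⟨hz_pos u hu.1, hzM u (Ioc_subset_Icc_self hu)⟩)
    (by rw [hscale]; exact mul_ne_top ofReal_ne_top hφ_fin)
  rw [hscale, toReal_mul, toReal_ofReal hM₀.le] at harrivals
  have hinitial : z₀ * (μ {ω | serviceAttained z 0 t < B0 ω ∧
      ENNReal.ofReal t < D0 ω}).toReal ≤ z₀ :=
    mul_le_of_le_one_right hz₀ measureReal_le_one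
  rw [hzt]
  calc _ ≤ z₀ + l * (M * (∫⁻ ω, min (B ω) (D ω / ENNReal.ofReal M) ∂μ).toReal) :=
        add_le_add hinitial (mul_le_mul_of_nonneg_left harrivals hl)
    _ = _ := by ring

theorem fluid_solution_bounded_general
    {Ω : Type*} [MeasurableSpace Ω] (μ : Measure Ω) [IsProbabilityMeasure μ]
    (B D B0 D0 : Ω → ℝ≥0∞) (hB : Measurable B) (hD : Measurable D)
    (z : ℝ → ℝ) (z₀ l : ℝ) (hz₀ : 0 ≤ z₀) (hl : 0 < l)
    (hzcont : Continuous z)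
    (hinf : ∀ a : ℝ, 0 < a → ∃ c > 0, ∀ t, a < t → c ≤ z t)
    (heq : ∀ t : ℝ, 0 ≤ t →
      z t = z₀ * (μ {ω | (∫⁻ u in Set.Ioc (0 : ℝ) t, ENNReal.ofReal ((z u)⁻¹)) < B0 ω ∧
                ENNReal.ofReal t < D0 ω}).toReal
          + l * ∫ s in (0 : ℝ)..t,
              (μ {ω | (∫⁻ u in Set.Ioc s t, ENNReal.ofReal ((z u)⁻¹)) < B ω ∧
                ENNReal.ofReal (t - s) < D ω}).toReal)
    (hsub : ENNReal.ofReal l * ∫⁻ ω in {ω | D ω = ⊤}, B ω ∂μ < 1)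
    (hmin : ∫⁻ ω, min (B ω) (D ω) ∂μ ≠ ⊤) :
    ∃ M : ℝ, ∀ t : ℝ, 0 ≤ t → z t ≤ M := by
  have hz_pos : ∀ u, 0 < u → 0 < z u := fun u hu => by
    obtain ⟨c, hc, hcz⟩ := hinf (u / 2) (by linarith)
    exact hc.trans_le (hcz u (by linarith))
  set β := ∫⁻ ω in {ω | D ω = ⊤}, B ω ∂μ
  have hβ_fin : β ≠ ⊤ := fun hβ => by simp [hβ, hl] at hsub
  have hlβ : l * β.toReal < 1 := by
    simpa [toReal_mul, toReal_ofReal hl.le] using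
      (toReal_lt_toReal (mul_ne_top ofReal_ne_top hβ_fin) one_ne_top).2 hsub
  have hlim : Tendsto (fun M => l * (∫⁻ ω, min (B ω) (D ω / ENNReal.ofReal M) ∂μ).toReal)
      atTop (𝓝 (l * β.toReal)) :=
    ((tendsto_toReal hβ_fin).comp
      (tendsto_lintegral_min_div_ofReal_atTop μ hB hD hmin)).const_mul l
  obtain ⟨M₀, hM₀⟩ :=
    ((eventually_add_mul_lt_self hlim hlβ z₀).and (eventually_ge_atTop 1)).exists_forall_of_atTop
  refine ⟨M₀, fun t ht => ?_⟩
  obtain ⟨s, ⟨hs₀, hst⟩, hmax⟩ :=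
    isCompact_Icc.exists_isMaxOn (nonempty_Icc.2 ht) hzcont.continuousOn
  refine (hmax ⟨ht, le_rfl⟩).trans (not_lt.1 fun hs => ?_)
  obtain ⟨hlt, hs₁⟩ := hM₀ (z s) hs.le
  have hbound := fluid_le_of_forall_mem_Icc_le μ hB hD hz₀ hl.le hz_pos (heq s hs₀) hmin hs₀ hs₁
    fun u hu => hmax ⟨hu.1, hu.2.trans hst⟩
  linarith

/-- If `λ E[B 1_{D=∞}] < 1` and `E[min{B,D}] < ∞`, then any fluid model solution
is bounded. -/
theorem fluid_solution_bounded
    {Ω : Type*} [MeasurableSpace Ω] (μ : Measure Ω) [IsProbabilityMeasure μ]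
    (B D B0 D0 : Ω → ℝ≥0∞) (hB : Measurable B) (hD : Measurable D)
    (z : ℝ → ℝ) (z₀ l : ℝ) (hz₀ : 0 ≤ z₀) (hl : 0 < l)
    (hznn : ∀ t, 0 ≤ z t) (hzcont : Continuous z)
    (hinf : ∀ a : ℝ, 0 < a → ∃ c > 0, ∀ t, a < t → c ≤ z t)
    (heq : ∀ t : ℝ, 0 ≤ t →
      z t = z₀ * (μ {ω | (∫⁻ u in Set.Ioc (0 : ℝ) t, ENNReal.ofReal ((z u)⁻¹)) < B0 ω ∧
                ENNReal.ofReal t < D0 ω}).toReal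
          + l * ∫ s in (0 : ℝ)..t,
              (μ {ω | (∫⁻ u in Set.Ioc s t, ENNReal.ofReal ((z u)⁻¹)) < B ω ∧
                ENNReal.ofReal (t - s) < D ω}).toReal)
    (hsub : ENNReal.ofReal l * ∫⁻ ω in {ω | D ω = ⊤}, B ω ∂μ < 1)
    (hmin : ∫⁻ ω, min (B ω) (D ω) ∂μ ≠ ⊤) :
    ∃ M : ℝ, ∀ t : ℝ, 0 ≤ t → z t ≤ M :=
  fluid_solution_bounded_general μ B D B0 D0 hB hD z z₀ l hz₀ hl hzcont hinf heq hsub hmin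
end

section
/- If B is exponentially distributed with rate μ and independent of D, and ρ = λ/μ > 1, then the success probability P_s = P(D > z∞B) equals 1/ρ, regardless of the distribution of D, where z∞ solves λ∫₀^∞ e^{−μu}P(D ≥ z∞u) du = 1. -/
open MeasureTheory ENNReal Set ProbabilityTheory

/-! The density of an exponential law of rate `m` is `m` times its tail `e^{-m u}`, which is exactly
the weight in the fixed-point equation. Conditioning on `B` (ties `z B = D` are null because `B` has
no atoms) gives `P(z B < D) = m ∫₀^∞ e^{-m u} P(D ≥ z u) du = m / λ`, whatever the law of `D`. -/

namespace ProbabilityTheory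

instance nullSingletonClass_expMeasure (r : ℝ) : NullSingletonClass (expMeasure r) :=
  inferInstanceAs (NullSingletonClass (volume.withDensity (exponentialPDF r)))

lemma expMeasure_Ici {r x : ℝ} (hr : 0 < r) (hx : 0 ≤ x) :
    expMeasure r (Ici x) = ENNReal.ofReal (Real.exp (-r * x)) := by
  have := isProbabilityMeasure_expMeasure hr
  rw [← ofReal_measureReal, ← compl_Iio, probReal_compl_eq_one_sub measurableSet_Iio,
    measureReal_congr Iio_ae_eq_Iic, ← cdf_eq_real, cdf_expMeasure_eq hr, if_pos hx]
  ring_nf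

lemma eq_expMeasure_of_measure_Ici {ν : Measure ℝ} [IsProbabilityMeasure ν] {r : ℝ} (hr : 0 < r)
    (hν : ∀ x, 0 ≤ x → ν (Ici x) = ENNReal.ofReal (Real.exp (-r * x))) :
    ν = expMeasure r := by
  have := isProbabilityMeasure_expMeasure hr
  refine Measure.ext_of_Ici _ _ fun x => ?_
  rcases le_or_gt 0 x with hx | hx
  · rw [hν x hx, expMeasure_Ici hr hx]
  · have full : ∀ ρ : Measure ℝ, IsProbabilityMeasure ρ → ρ (Ici 0) = 1 → ρ (Ici x) = 1 :=
      fun ρ _ h0 => le_antisymm prob_le_one (h0 ▸ measure_mono (Ici_subset_Ici.2 hx.le))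
    rw [full ν ‹_› (by simpa using hν 0 le_rfl),
      full _ ‹_› (by simpa using expMeasure_Ici hr le_rfl)]

lemma lintegral_expMeasure (r : ℝ) {f : ℝ → ℝ≥0∞} (hf : Measurable f) :
    ∫⁻ x, f x ∂expMeasure r = ∫⁻ x in Ioi 0, ENNReal.ofReal (r * Real.exp (-r * x)) * f x := by
  change ∫⁻ x, f x ∂volume.withDensity (exponentialPDF r) = _
  rw [lintegral_withDensity_eq_lintegral_mul (f := exponentialPDF r) _
      (measurable_exponentialPDFReal r).ennreal_ofReal hf,
    ← setLIntegral_congr Ioi_ae_eq_Ici.symm, ← lintegral_indicator measurableSet_Ici]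
  congr 1 with x
  rcases le_or_gt 0 x with hx | hx
  · simp [hx, exponentialPDF_of_nonneg]
  · simp [hx, exponentialPDF_of_neg]

lemma IndepFun.measure_mem_eq_lintegral {Ω α β : Type*} [MeasurableSpace Ω] [MeasurableSpace α]
    [MeasurableSpace β] {μ : Measure Ω} [IsFiniteMeasure μ] {X : Ω → α} {Y : Ω → β}
    (hXY : IndepFun X Y μ) (hX : Measurable X) (hY : Measurable Y) {s : Set (α × β)}
    (hs : MeasurableSet s) :
    μ {ω | (X ω, Y ω) ∈ s} = ∫⁻ x, μ.map Y (Prod.mk x ⁻¹' s) ∂μ.map X := by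
  rw [← Measure.prod_apply hs, ← (indepFun_iff_map_prod_eq_prod_map_map hX.aemeasurable
    hY.aemeasurable).1 hXY, Measure.map_apply (hX.prodMk hY) hs]
  rfl

lemma IndepFun.measure_mul_eq_eq_zero {Ω : Type*} [MeasurableSpace Ω] {μ : Measure Ω}
    [IsFiniteMeasure μ] {X Y : Ω → ℝ} (hXY : IndepFun X Y μ) (hX : Measurable X)
    (hY : Measurable Y) [NullSingletonClass (μ.map X)] {z : ℝ} (hz : z ≠ 0) :
    μ {ω | z * X ω = Y ω} = 0 := by
  have hs : MeasurableSet {p : ℝ × ℝ | z * p.2 = p.1} :=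
    measurableSet_eq_fun (measurable_snd.const_mul z) measurable_fst
  have hsection : ∀ y, Prod.mk y ⁻¹' {p : ℝ × ℝ | z * p.2 = p.1} = {y / z} := fun y => by
    ext x
    simp [eq_div_iff hz, mul_comm]
  simpa [hsection] using hXY.symm.measure_mem_eq_lintegral hY hX hs

lemma IndepFun.measure_mul_lt_eq_lintegral {Ω : Type*} [MeasurableSpace Ω] {μ : Measure Ω}
    [IsFiniteMeasure μ] {X Y : Ω → ℝ} (hXY : IndepFun X Y μ) (hX : Measurable X)
    (hY : Measurable Y) [NullSingletonClass (μ.map X)] {z : ℝ} (hz : z ≠ 0) :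
    μ {ω | z * X ω < Y ω} = ∫⁻ x, μ {ω | z * x ≤ Y ω} ∂μ.map X := by
  have no_ties : μ {ω | z * X ω < Y ω} = μ {ω | z * X ω ≤ Y ω} := by
    have hsplit : {ω | z * X ω ≤ Y ω} = {ω | z * X ω < Y ω} ∪ {ω | z * X ω = Y ω} := by
      ext ω
      simp [le_iff_lt_or_eq]
    rw [hsplit, measure_congr (union_ae_eq_left_of_ae_eq_empty
      (ae_eq_empty.2 (hXY.measure_mul_eq_eq_zero hX hY hz)))]
  have hs : MeasurableSet {p : ℝ × ℝ | z * p.1 ≤ p.2} :=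
    measurableSet_le (measurable_fst.const_mul z) measurable_snd
  rw [no_ties]
  refine (hXY.measure_mem_eq_lintegral hX hY hs).trans (lintegral_congr fun x => ?_)
  exact Measure.map_apply hY (measurableSet_Ici : MeasurableSet (Ici (z * x)))

end ProbabilityTheory

theorem exponential_service_insensitivity_general
    {Ω : Type*} [MeasurableSpace Ω] (μ : Measure Ω) [IsProbabilityMeasure μ]
    (B D : Ω → ℝ) (hB : Measurable B) (hD : Measurable D)
    (hindep : ProbabilityTheory.IndepFun B D μ)
    (m l : ℝ) (hm : 0 < m)
    (hBexp : ∀ x : ℝ, 0 ≤ x → μ {ω | x ≤ B ω} = ENNReal.ofReal (Real.exp (-m * x)))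
    (z : ℝ) (hz : 0 < z)
    (hfp : l * ∫ u in Set.Ioi (0 : ℝ),
        Real.exp (-m * u) * (μ {ω | z * u ≤ D ω}).toReal = 1) :
    (μ {ω | z * B ω < D ω}).toReal = 1 / (l / m) := by
  have : IsProbabilityMeasure (μ.map B) := Measure.isProbabilityMeasure_map hB.aemeasurable
  have hB_law : μ.map B = expMeasure m := eq_expMeasure_of_measure_Ici hm fun x hx => by
    rw [Measure.map_apply hB measurableSet_Ici]
    exact hBexp x hx
  have : NullSingletonClass (μ.map B) := hB_law ▸ inferInstance
  set tail : ℝ → ℝ≥0∞ := fun u => μ {ω | z * u ≤ D ω}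
  have tail_measurable : Measurable tail :=
    Antitone.measurable fun u v huv =>
      measure_mono fun ω hω => (mul_le_mul_of_nonneg_left huv hz.le).trans hω
  have success : μ {ω | z * B ω < D ω} =
      ENNReal.ofReal m * ∫⁻ u in Ioi 0, ENNReal.ofReal (Real.exp (-m * u)) * tail u := by
    rw [hindep.measure_mul_lt_eq_lintegral hB hD hz.ne', hB_law,
      lintegral_expMeasure m tail_measurable, ← lintegral_const_mul _ (by fun_prop)]
    simp only [ENNReal.ofReal_mul hm.le, mul_assoc]
  have fixed_point :
      (∫⁻ u in Ioi 0, ENNReal.ofReal (Real.exp (-m * u)) * tail u).toReal = 1 / l := by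
    have integrand_measurable : Measurable fun u => Real.exp (-m * u) * (tail u).toReal :=
      (by fun_prop : Measurable fun u => Real.exp (-m * u)).mul tail_measurable.ennreal_toReal
    rw [← eq_one_div_of_mul_eq_one_right hfp, integral_eq_lintegral_of_nonneg_ae
      (.of_forall fun u => mul_nonneg (Real.exp_nonneg _) toReal_nonneg)
      integrand_measurable.aestronglyMeasurable]
    refine congrArg ENNReal.toReal (lintegral_congr fun u => ?_)
    rw [ENNReal.ofReal_mul (Real.exp_nonneg _), ENNReal.ofReal_toReal (measure_ne_top _ _)]
  rw [success, toReal_mul, toReal_ofReal hm.le, fixed_point, one_div_div, mul_one_div]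

/-- If `B` is exponential with rate `m`, independent of `D`, and `ρ = λ/m > 1`,
then the success probability `P(D > z∞ B)` equals `1/ρ`, regardless of the
distribution of `D`, where `z∞` solves `λ ∫₀^∞ e^{-mu} P(D ≥ z∞ u) du = 1`. -/
theorem exponential_service_insensitivity
    {Ω : Type*} [MeasurableSpace Ω] (μ : Measure Ω) [IsProbabilityMeasure μ]
    (B D : Ω → ℝ) (hB : Measurable B) (hD : Measurable D)
    (hindep : ProbabilityTheory.IndepFun B D μ)
    (m l : ℝ) (hm : 0 < m) (hl : 0 < l) (hρ : 1 < l / m)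
    (hBexp : ∀ x : ℝ, 0 ≤ x → μ {ω | x ≤ B ω} = ENNReal.ofReal (Real.exp (-m * x)))
    (z : ℝ) (hz : 0 < z)
    (hfp : l * ∫ u in Set.Ioi (0 : ℝ),
        Real.exp (-m * u) * (μ {ω | z * u ≤ D ω}).toReal = 1) :
    (μ {ω | z * B ω < D ω}).toReal = 1 / (l / m) :=
  exponential_service_insensitivity_general μ B D hB hD hindep m l hm hBexp z hz hfp
end

section
/- Suppose the fluid model data satisfy z₀ > 0 and F₀(x,y) = P(B⁰ ≥ x; D⁰ ≥ y) is Lipschitz continuous in y with constant L. Then the time-changed fluid equation z̃(t) = z₀P(B⁰ ≥ t; D⁰ ≥ S̃(t)) + λ∫₀ᵗ z̃(u)P(B ≥ t−u; D ≥ S̃(t)−S̃(u)) du, with S̃(t) = ∫₀ᵗ z̃(u)du, has at most one solution on the interval [0, a] where a = 1/(2(z₀L + 4λ)). -/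
/-!
Let `ε` be the maximum of `|z - g|` on `[0, a]`, attained at `w`, so that the time changes
`S = ∫ z` and `T = ∫ g` differ by at most `δ = a ε` on `[0, a]`. By the Lipschitz hypothesis the
initial terms of the two equations at `w` differ by at most `z₀ L δ`. In the convolution terms the
weights `ρ u = F(w - u, S w - S u)` and `σ u = F(w - u, T w - T u)` are monotone in `u` with values
in `[0, 1]`, and `σ v ≤ ρ u` as soon as `T u ≥ T v + 2δ`. Cutting `[0, w]` at equally spaced levels
of `T`, this shift of `2δ` costs `2δ` and an Abel summation passing from `T` to `S` costs another
`2δ`, so the convolution terms differ by at most `4δ`. Hence `ε ≤ (z₀ L + 4λ) a ε = ε / 2`.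
-/

open MeasureTheory ENNReal Set

theorem sum_mul_sub_le_two_mul {r D : ℕ → ℝ} {δ : ℝ} (hr : Monotone r) (hr0 : ∀ i, 0 ≤ r i)
    (hr1 : ∀ i, r i ≤ 1) (hD : ∀ i, |D i| ≤ δ) (n : ℕ) :
    ∑ i ∈ Finset.range n, r i * (D (i + 1) - D i) ≤ 2 * δ := by
  have hDδ : ∀ i, 0 ≤ D i + δ := fun i => by linarith [neg_abs_le (D i), hD i]
  have partial_sum_le : ∀ m, ∑ i ∈ Finset.range m, r i * (D (i + 1) - D i) ≤ r m * (D m + δ) := by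
    intro m
    induction m with
    | zero => simpa using mul_nonneg (hr0 0) (hDδ 0)
    | succ m ih =>
      rw [Finset.sum_range_succ]
      nlinarith [mul_le_mul_of_nonneg_right (hr m.le_succ) (hDδ (m + 1))]
  calc _ ≤ r n * (D n + δ) := partial_sum_le n
    _ ≤ 1 * (δ + δ) := mul_le_mul (hr1 n) (by linarith [le_abs_self (D n), hD n]) (hDδ n) zero_le_one
    _ = 2 * δ := by ring

theorem sum_range_succ_le_sum_range_add_of_shift {a b : ℕ → ℝ} {k n : ℕ} (ha : ∀ i, a i ≤ 1)
    (hb : ∀ i, 0 ≤ b i) (hab : ∀ i, k + 1 + i < n → a (i + 1) ≤ b (k + 1 + i)) :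
    ∑ i ∈ Finset.range n, a (i + 1) ≤ ∑ i ∈ Finset.range n, b i + (k + 1) := by
  have hsum_le_card : ∀ (m : ℕ) (f : ℕ → ℕ), ∑ i ∈ Finset.range m, a (f i) ≤ m := fun m f => by
    simpa using Finset.sum_le_sum fun i (_ : i ∈ Finset.range m) => ha (f i)
  have hb_sum : ∀ m, 0 ≤ ∑ i ∈ Finset.range m, b i := fun m => Finset.sum_nonneg fun i _ => hb i
  rcases le_or_gt n (k + 1) with hn | hn
  · have : (n : ℝ) ≤ k + 1 := by exact_mod_cast hn
    linarith [hsum_le_card n (· + 1), hb_sum n]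
  obtain ⟨m, rfl⟩ := Nat.exists_eq_add_of_le hn.le
  have hhead : ∑ i ∈ Finset.range m, a (i + 1) ≤ ∑ i ∈ Finset.range m, b (k + 1 + i) :=
    Finset.sum_le_sum fun i hi => hab i (by simp at hi; omega)
  rw [Finset.sum_range_add b, add_comm (k + 1) m, Finset.sum_range_add (fun i => a (i + 1))]
  have : ((k + 1 : ℕ) : ℝ) = k + 1 := by push_cast; ring
  linarith [hsum_le_card (k + 1) (fun i => m + i + 1), hb_sum (k + 1)]

section MonotoneWeight

variable {f φ : ℝ → ℝ}

theorem ContinuousOn.intervalIntegrable_mul_of_monotoneOn {a b : ℝ} (hab : a ≤ b)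
    (hf : ContinuousOn f (Icc a b)) (hφ : MonotoneOn φ (Icc a b)) :
    IntervalIntegrable (fun x => f x * φ x) volume a b := by
  rw [← uIcc_of_le hab] at hf hφ
  exact hφ.intervalIntegrable.continuousOn_mul hf

theorem integral_mul_le_mul_integral_of_monotoneOn {a b : ℝ} (hab : a ≤ b)
    (hf : ContinuousOn f (Icc a b)) (hf0 : ∀ x ∈ Icc a b, 0 ≤ f x) (hφ : MonotoneOn φ (Icc a b)) :
    ∫ x in a..b, f x * φ x ≤ φ b * ∫ x in a..b, f x := by
  rw [mul_comm, ← intervalIntegral.integral_mul_const]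
  refine intervalIntegral.integral_mono_on hab (hf.intervalIntegrable_mul_of_monotoneOn hab hφ)
    ((hf.intervalIntegrable_of_Icc hab).mul_const _) fun x hx => ?_
  exact mul_le_mul_of_nonneg_left (hφ hx (right_mem_Icc.2 hab) hx.2) (hf0 x hx)

theorem mul_integral_le_integral_mul_of_monotoneOn {a b : ℝ} (hab : a ≤ b)
    (hf : ContinuousOn f (Icc a b)) (hf0 : ∀ x ∈ Icc a b, 0 ≤ f x) (hφ : MonotoneOn φ (Icc a b)) :
    φ a * ∫ x in a..b, f x ≤ ∫ x in a..b, f x * φ x := by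
  rw [mul_comm, ← intervalIntegral.integral_mul_const]
  refine intervalIntegral.integral_mono_on hab ((hf.intervalIntegrable_of_Icc hab).mul_const _)
    (hf.intervalIntegrable_mul_of_monotoneOn hab hφ) fun x hx => ?_
  exact mul_le_mul_of_nonneg_left (hφ (left_mem_Icc.2 hab) hx hx.1) (hf0 x hx)

variable {u : ℕ → ℝ} {n : ℕ}

theorem Monotone.Icc_succ_subset_Icc (hu : Monotone u) {i : ℕ} (hi : i < n) :
    Icc (u i) (u (i + 1)) ⊆ Icc (u 0) (u n) :=
  Icc_subset_Icc (hu i.zero_le) (hu hi)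

theorem integral_mul_le_sum_of_monotoneOn (hu : Monotone u) (hf : ContinuousOn f (Icc (u 0) (u n)))
    (hf0 : ∀ x ∈ Icc (u 0) (u n), 0 ≤ f x) (hφ : MonotoneOn φ (Icc (u 0) (u n))) :
    ∫ x in u 0..u n, f x * φ x ≤ ∑ i ∈ Finset.range n, φ (u (i + 1)) * ∫ x in u i..u (i + 1), f x := by
  rw [← intervalIntegral.sum_integral_adjacent_intervals fun i hi =>
    (hf.mono (hu.Icc_succ_subset_Icc hi)).intervalIntegrable_mul_of_monotoneOn
      (hu i.le_succ) (hφ.mono (hu.Icc_succ_subset_Icc hi))]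
  refine Finset.sum_le_sum fun i hi => ?_
  have hsub := hu.Icc_succ_subset_Icc (Finset.mem_range.1 hi)
  exact integral_mul_le_mul_integral_of_monotoneOn (hu i.le_succ) (hf.mono hsub)
    (fun x hx => hf0 x (hsub hx)) (hφ.mono hsub)

theorem sum_le_integral_mul_of_monotoneOn (hu : Monotone u) (hf : ContinuousOn f (Icc (u 0) (u n)))
    (hf0 : ∀ x ∈ Icc (u 0) (u n), 0 ≤ f x) (hφ : MonotoneOn φ (Icc (u 0) (u n))) :
    ∑ i ∈ Finset.range n, φ (u i) * ∫ x in u i..u (i + 1), f x ≤ ∫ x in u 0..u n, f x * φ x := by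
  rw [← intervalIntegral.sum_integral_adjacent_intervals fun i hi =>
    (hf.mono (hu.Icc_succ_subset_Icc hi)).intervalIntegrable_mul_of_monotoneOn
      (hu i.le_succ) (hφ.mono (hu.Icc_succ_subset_Icc hi))]
  refine Finset.sum_le_sum fun i hi => ?_
  have hsub := hu.Icc_succ_subset_Icc (Finset.mem_range.1 hi)
  exact mul_integral_le_integral_mul_of_monotoneOn (hu i.le_succ) (hf.mono hsub)
    (fun x hx => hf0 x (hsub hx)) (hφ.mono hsub)

end MonotoneWeight

theorem monotoneOn_primitive {f : ℝ → ℝ} {t : ℝ} (hf : ContinuousOn f (Icc 0 t))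
    (hf0 : ∀ x ∈ Icc 0 t, 0 ≤ f x) : MonotoneOn (fun x => ∫ v in 0..x, f v) (Icc 0 t) :=
  fun _ hx _ hy hxy => intervalIntegral.integral_mono_interval le_rfl hx.1 hxy
    (ae_restrict_of_forall_mem measurableSet_Ioc fun v hv => hf0 v ⟨hv.1.le, hv.2.trans hy.2⟩)
    ((hf.mono (Icc_subset_Icc le_rfl hy.2)).intervalIntegrable_of_Icc hy.1)

theorem exists_monotone_partition_of_levels {T : ℝ → ℝ} {t η : ℝ} {n : ℕ} (ht : 0 ≤ t)
    (hT : ContinuousOn T (Icc 0 t)) (hTmono : MonotoneOn T (Icc 0 t)) (hη : 0 < η) (hn : 0 < n)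
    (hTt : T t = T 0 + n * η) :
    ∃ u : ℕ → ℝ, Monotone u ∧ u 0 = 0 ∧ u n = t ∧ (∀ i, u i ∈ Icc 0 t) ∧
      ∀ i ≤ n, T (u i) = T 0 + i * η := by
  have hlevel : ∀ i, ∃ x ∈ Icc 0 t, i ≤ n → T x = T 0 + i * η := fun i => by
    by_cases hi : i ≤ n
    · have hmem : T 0 + i * η ∈ Icc (T 0) (T t) := ⟨le_add_of_nonneg_right (by positivity), by
        rw [hTt]; gcongr⟩
      obtain ⟨x, hx, hTx⟩ := intermediate_value_Icc ht hT hmem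
      exact ⟨x, hx, fun _ => hTx⟩
    · exact ⟨0, left_mem_Icc.2 ht, fun h => absurd h hi⟩
  choose x hxmem hxT using hlevel
  set u : ℕ → ℝ := fun i => if i = 0 then 0 else if n ≤ i then t else x i with hu
  have humem : ∀ i, u i ∈ Icc 0 t := fun i => by
    simp only [hu]; split_ifs
    exacts [left_mem_Icc.2 ht, right_mem_Icc.2 ht, hxmem i]
  have huT : ∀ i ≤ n, T (u i) = T 0 + i * η := fun i hi => by
    simp only [hu]; split_ifs with h0 hn'
    · simp [h0]
    · rw [le_antisymm hi hn', hTt]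
    · exact hxT i hi
  refine ⟨u, monotone_nat_of_le_succ fun i => ?_, by simp [hu], by simp [hu, hn.ne'], humem, huT⟩
  by_cases hi : i < n
  · refine (hTmono.reflect_lt (humem i) (humem (i + 1)) ?_).le
    rw [huT i hi.le, huT (i + 1) hi]
    push_cast; linarith
  · have : u (i + 1) = t := by simp only [hu]; rw [if_neg i.succ_ne_zero, if_pos (by omega)]
    exact this ▸ (humem i).2

theorem exists_nat_mul_mem_Icc {c η : ℝ} (hc : 0 ≤ c) (hη : 0 < η) :
    ∃ k : ℕ, (k : ℝ) * η ∈ Icc c (c + η) := by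
  refine ⟨⌈c / η⌉₊, (div_le_iff₀ hη).1 (Nat.le_ceil _), ?_⟩
  have := (mul_lt_mul_iff_left₀ hη).2 (Nat.ceil_lt_add_one (div_nonneg hc hη.le))
  rw [add_mul, div_mul_cancel₀ _ hη.ne', one_mul] at this
  exact this.le

theorem integral_sub_integral_of_mem_Icc {f : ℝ → ℝ} {t : ℝ} (hf : ContinuousOn f (Icc 0 t))
    {x y : ℝ} (hx : x ∈ Icc 0 t) (hy : y ∈ Icc 0 t) :
    ∫ v in x..y, f v = (∫ v in 0..y, f v) - ∫ v in 0..x, f v := by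
  have hI : ∀ w ∈ Icc 0 t, IntervalIntegrable f volume 0 w := fun w hw =>
    (hf.mono (Icc_subset_Icc le_rfl hw.2)).intervalIntegrable_of_Icc hw.1
  exact (intervalIntegral.integral_interval_sub_left (hI y hy) (hI x hx)).symm

theorem integral_mul_le_integral_mul_add_of_partition {z g ρ σ : ℝ → ℝ} {t δ : ℝ}
    (hz : ContinuousOn z (Icc 0 t)) (hg : ContinuousOn g (Icc 0 t))
    (hz0 : ∀ x ∈ Icc 0 t, 0 ≤ z x) (hg0 : ∀ x ∈ Icc 0 t, 0 ≤ g x)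
    (hδ : ∀ x ∈ Icc 0 t, |(∫ v in 0..x, z v) - ∫ v in 0..x, g v| ≤ δ)
    (hρ : MonotoneOn ρ (Icc 0 t)) (hσ : MonotoneOn σ (Icc 0 t))
    (hρ0 : ∀ x ∈ Icc 0 t, 0 ≤ ρ x) (hρ1 : ∀ x ∈ Icc 0 t, ρ x ≤ 1) (hσ1 : ∀ x ∈ Icc 0 t, σ x ≤ 1)
    (hcoupling : ∀ v ∈ Icc 0 t, ∀ w ∈ Icc 0 t, v ≤ w →
      (∫ x in 0..v, g x) + 2 * δ ≤ ∫ x in 0..w, g x → σ v ≤ ρ w)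
    {u : ℕ → ℝ} {n : ℕ} {η : ℝ} (hη : 0 < η)
    (hu : Monotone u) (hu0 : u 0 = 0) (hun : u n = t) (humem : ∀ i, u i ∈ Icc 0 t)
    (hlevel : ∀ i ≤ n, ∫ v in 0..u i, g v = i * η) :
    ∫ x in 0..t, g x * σ x ≤ (∫ x in 0..t, z x * ρ x) + 4 * δ + 2 * η := by
  have hδ0 : 0 ≤ δ := by simpa using hδ 0 ⟨le_rfl, (humem 0).1.trans (humem 0).2⟩
  obtain ⟨k, hk, hk'⟩ := exists_nat_mul_mem_Icc (by positivity : 0 ≤ 2 * δ) hη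
  have hgpiece : ∀ i < n, ∫ x in u i..u (i + 1), g x = η := fun i hi => by
    rw [integral_sub_integral_of_mem_Icc hg (humem i) (humem (i + 1)), hlevel i hi.le,
      hlevel (i + 1) hi]
    push_cast; ring
  have hshift : ∑ i ∈ Finset.range n, σ (u (i + 1)) ≤ ∑ i ∈ Finset.range n, ρ (u i) + (k + 1) :=
    sum_range_succ_le_sum_range_add_of_shift (fun i => hσ1 _ (humem i)) (fun i => hρ0 _ (humem i))
      fun i hi => hcoupling _ (humem _) _ (humem _) (hu (by omega)) (by
        rw [hlevel _ (by omega), hlevel _ (by omega)]; push_cast; linarith)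
  have habel := sum_mul_sub_le_two_mul (r := fun i => ρ (u i))
    (D := fun i => (∫ v in 0..u i, g v) - ∫ v in 0..u i, z v)
    (fun i j hij => hρ (humem i) (humem j) (hu hij)) (fun i => hρ0 _ (humem i))
    (fun i => hρ1 _ (humem i)) (fun i => by rw [abs_sub_comm]; exact hδ _ (humem i)) n
  have hIcc : Icc (u 0) (u n) = Icc 0 t := by rw [hu0, hun]
  have hupper := integral_mul_le_sum_of_monotoneOn hu (hIcc ▸ hg) (hIcc ▸ hg0) (hIcc ▸ hσ)
  have hlower := sum_le_integral_mul_of_monotoneOn hu (hIcc ▸ hz) (hIcc ▸ hz0) (hIcc ▸ hρ)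
  rw [hu0, hun] at hupper hlower
  calc ∫ x in 0..t, g x * σ x
      ≤ ∑ i ∈ Finset.range n, σ (u (i + 1)) * ∫ x in u i..u (i + 1), g x := hupper
    _ = (∑ i ∈ Finset.range n, σ (u (i + 1))) * η := by
      rw [Finset.sum_mul]
      exact Finset.sum_congr rfl fun i hi => by rw [hgpiece i (Finset.mem_range.1 hi)]
    _ ≤ (∑ i ∈ Finset.range n, ρ (u i) + (k + 1)) * η := by gcongr
    _ = ∑ i ∈ Finset.range n, ρ (u i) * (∫ x in u i..u (i + 1), z x)
          + ∑ i ∈ Finset.range n, ρ (u i) * (((∫ v in 0..u (i + 1), g v) - ∫ v in 0..u (i + 1), z v)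
            - ((∫ v in 0..u i, g v) - ∫ v in 0..u i, z v)) + (k + 1) * η := by
      rw [add_mul, Finset.sum_mul, ← Finset.sum_add_distrib]
      congr 1
      refine Finset.sum_congr rfl fun i hi => ?_
      rw [← hgpiece i (Finset.mem_range.1 hi), integral_sub_integral_of_mem_Icc hg (humem i)
        (humem (i + 1)), integral_sub_integral_of_mem_Icc hz (humem i) (humem (i + 1))]
      ring
    _ ≤ (∫ x in 0..t, z x * ρ x) + 2 * δ + (k + 1) * η := by gcongr
    _ ≤ (∫ x in 0..t, z x * ρ x) + 4 * δ + 2 * η := by linarith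

theorem integral_mul_le_integral_mul_add_of_coupling {z g ρ σ : ℝ → ℝ} {t δ : ℝ} (ht : 0 ≤ t)
    (hz : ContinuousOn z (Icc 0 t)) (hg : ContinuousOn g (Icc 0 t))
    (hz0 : ∀ x ∈ Icc 0 t, 0 ≤ z x) (hg0 : ∀ x ∈ Icc 0 t, 0 ≤ g x)
    (hδ : ∀ x ∈ Icc 0 t, |(∫ v in 0..x, z v) - ∫ v in 0..x, g v| ≤ δ)
    (hρ : MonotoneOn ρ (Icc 0 t)) (hσ : MonotoneOn σ (Icc 0 t))
    (hρ0 : ∀ x ∈ Icc 0 t, 0 ≤ ρ x) (hρ1 : ∀ x ∈ Icc 0 t, ρ x ≤ 1) (hσ1 : ∀ x ∈ Icc 0 t, σ x ≤ 1)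
    (hcoupling : ∀ v ∈ Icc 0 t, ∀ w ∈ Icc 0 t, v ≤ w →
      (∫ x in 0..v, g x) + 2 * δ ≤ ∫ x in 0..w, g x → σ v ≤ ρ w) :
    ∫ x in 0..t, g x * σ x ≤ (∫ x in 0..t, z x * ρ x) + 4 * δ := by
  rcases (intervalIntegral.integral_nonneg ht hg0).eq_or_lt with hG | hG
  · have hzρ0 : 0 ≤ ∫ x in 0..t, z x * ρ x :=
      intervalIntegral.integral_nonneg ht fun x hx => mul_nonneg (hz0 x hx) (hρ0 x hx)
    have hδ0 : 0 ≤ δ := by simpa using hδ 0 (left_mem_Icc.2 ht)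
    have : ∫ x in 0..t, g x * σ x ≤ ∫ x in 0..t, g x :=
      intervalIntegral.integral_mono_on ht (hg.intervalIntegrable_mul_of_monotoneOn ht hσ)
        (hg.intervalIntegrable_of_Icc ht) fun x hx => mul_le_of_le_one_right (hg0 x hx) (hσ1 x hx)
    linarith
  refine le_of_forall_pos_le_add fun ε hε => ?_
  obtain ⟨n, hn⟩ := exists_nat_gt (2 * (∫ x in 0..t, g x) / ε)
  have hn0 : (0 : ℝ) < n := lt_trans (by positivity) hn
  have hTcont : ContinuousOn (fun x => ∫ v in 0..x, g v) (Icc 0 t) := by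
    have := intervalIntegral.continuousOn_primitive_interval (μ := volume)
      (hg.integrableOn_Icc.mono_set (uIcc_of_le ht).le)
    rwa [uIcc_of_le ht] at this
  obtain ⟨u, hu, hu0, hun, humem, hlevel⟩ := exists_monotone_partition_of_levels ht hTcont
    (monotoneOn_primitive hg hg0) (div_pos hG hn0) (by exact_mod_cast hn0)
    (by field_simp; simp)
  have hpartition := integral_mul_le_integral_mul_add_of_partition hz hg hz0 hg0 hδ hρ hσ hρ0
    hρ1 hσ1 hcoupling (div_pos hG hn0) hu hu0 hun humem (fun i hi => by simpa using hlevel i hi)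
  have hmesh : 2 * ((∫ x in 0..t, g x) / n) < ε := by
    rw [div_lt_iff₀ hε] at hn
    rw [mul_div_assoc', div_lt_iff₀ hn0]
    linarith
  linarith

section FluidModel

variable {Ω : Type*} [MeasurableSpace Ω] (μ : Measure Ω)

noncomputable def jointTail (X Y : Ω → ℝ≥0∞) (x y : ℝ) : ℝ :=
  (μ {ω | ENNReal.ofReal x ≤ X ω ∧ ENNReal.ofReal y ≤ Y ω}).toReal

noncomputable def fluidRHS (B0 D0 B D : Ω → ℝ≥0∞) (z₀ l : ℝ) (z : ℝ → ℝ) (t : ℝ) : ℝ :=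
  z₀ * jointTail μ B0 D0 t (∫ u in 0..t, z u)
    + l * ∫ u in 0..t, z u * jointTail μ B D (t - u) ((∫ v in 0..t, z v) - ∫ v in 0..u, z v)

variable {μ} {X Y : Ω → ℝ≥0∞}

theorem jointTail_nonneg (x y : ℝ) : 0 ≤ jointTail μ X Y x y := ENNReal.toReal_nonneg

theorem jointTail_le_one [IsProbabilityMeasure μ] (x y : ℝ) : jointTail μ X Y x y ≤ 1 :=
  measureReal_le_one

theorem jointTail_anti [IsFiniteMeasure μ] {x x' y y' : ℝ} (hx : x ≤ x') (hy : y ≤ y') :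
    jointTail μ X Y x' y' ≤ jointTail μ X Y x y :=
  ENNReal.toReal_mono (measure_ne_top μ _) <| measure_mono fun _ hω =>
    ⟨(ENNReal.ofReal_le_ofReal hx).trans hω.1, (ENNReal.ofReal_le_ofReal hy).trans hω.2⟩

theorem integral_mul_jointTail_le [IsProbabilityMeasure μ] {z g : ℝ → ℝ} {t δ : ℝ} (ht : 0 ≤ t)
    (hz : ContinuousOn z (Icc 0 t)) (hg : ContinuousOn g (Icc 0 t))
    (hz0 : ∀ x ∈ Icc 0 t, 0 ≤ z x) (hg0 : ∀ x ∈ Icc 0 t, 0 ≤ g x)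
    (hδ : ∀ x ∈ Icc 0 t, |(∫ v in 0..x, z v) - ∫ v in 0..x, g v| ≤ δ) :
    ∫ u in 0..t, g u * jointTail μ X Y (t - u) ((∫ v in 0..t, g v) - ∫ v in 0..u, g v) ≤
      (∫ u in 0..t, z u * jointTail μ X Y (t - u) ((∫ v in 0..t, z v) - ∫ v in 0..u, z v))
        + 4 * δ := by
  have hanti {f : ℝ → ℝ} (hf : ContinuousOn f (Icc 0 t)) (hf0 : ∀ x ∈ Icc 0 t, 0 ≤ f x) :
      MonotoneOn (fun u => jointTail μ X Y (t - u) ((∫ v in 0..t, f v) - ∫ v in 0..u, f v))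
        (Icc 0 t) := fun x hx y hy hxy =>
    jointTail_anti (by linarith) (by linarith [monotoneOn_primitive hf hf0 hx hy hxy])
  refine integral_mul_le_integral_mul_add_of_coupling ht hz hg hz0 hg0 hδ (hanti hz hz0)
    (hanti hg hg0) (fun _ _ => jointTail_nonneg _ _) (fun _ _ => jointTail_le_one _ _)
    (fun _ _ => jointTail_le_one _ _) fun v _ w hw hvw hgap => jointTail_anti (by linarith) ?_
  have hδt := abs_le.1 (hδ t (right_mem_Icc.2 ht))
  have hδw := abs_le.1 (hδ w hw)
  linarith

theorem abs_fluidRHS_sub_le [IsProbabilityMeasure μ] {B0 D0 B D : Ω → ℝ≥0∞} {z₀ l L : ℝ}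
    (hz₀ : 0 ≤ z₀) (hl : 0 ≤ l) (hL : 0 ≤ L)
    (hLip : ∀ x y y' : ℝ, 0 ≤ x → 0 ≤ y → 0 ≤ y' →
      |jointTail μ B0 D0 x y - jointTail μ B0 D0 x y'| ≤ L * |y - y'|)
    {z g : ℝ → ℝ} {t δ : ℝ} (ht : 0 ≤ t)
    (hz : ContinuousOn z (Icc 0 t)) (hg : ContinuousOn g (Icc 0 t))
    (hz0 : ∀ x ∈ Icc 0 t, 0 ≤ z x) (hg0 : ∀ x ∈ Icc 0 t, 0 ≤ g x)
    (hδ : ∀ x ∈ Icc 0 t, |(∫ v in 0..x, z v) - ∫ v in 0..x, g v| ≤ δ) :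
    |fluidRHS μ B0 D0 B D z₀ l z t - fluidRHS μ B0 D0 B D z₀ l g t| ≤ (z₀ * L + 4 * l) * δ := by
  have hinit := (hLip t _ _ ht (intervalIntegral.integral_nonneg ht hz0)
    (intervalIntegral.integral_nonneg ht hg0)).trans
    (mul_le_mul_of_nonneg_left (hδ t (right_mem_Icc.2 ht)) hL)
  have hkernel := integral_mul_jointTail_le (μ := μ) (X := B) (Y := D) ht hz hg hz0 hg0 hδ
  have hkernel' := integral_mul_jointTail_le (μ := μ) (X := B) (Y := D) ht hg hz hg0 hz0
    fun x hx => by rw [abs_sub_comm]; exact hδ x hx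
  rw [abs_le] at hinit ⊢
  unfold fluidRHS
  constructor
  · linarith [mul_le_mul_of_nonneg_left hinit.1 hz₀, mul_le_mul_of_nonneg_left hkernel hl]
  · linarith [mul_le_mul_of_nonneg_left hinit.2 hz₀, mul_le_mul_of_nonneg_left hkernel' hl]

end FluidModel

/-- Uniqueness of solutions of the time-changed fluid equation on `[0, a]` with
`a = 1/(2(z₀ L + 4λ))`, under a Lipschitz condition on `F₀(x,y) = P(B⁰ ≥ x; D⁰ ≥ y)`
in the second variable. -/
theorem time_changed_fluid_equation_unique
    {Ω : Type*} [MeasurableSpace Ω] (μ : Measure Ω) [IsProbabilityMeasure μ]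
    (B0 D0 B D : Ω → ℝ≥0∞)
    (z₀ l L : ℝ) (hz₀ : 0 < z₀) (hl : 0 < l) (hL : 0 ≤ L)
    (hLip : ∀ x y y' : ℝ, 0 ≤ x → 0 ≤ y → 0 ≤ y' →
      |(μ {ω | ENNReal.ofReal x ≤ B0 ω ∧ ENNReal.ofReal y ≤ D0 ω}).toReal -
        (μ {ω | ENNReal.ofReal x ≤ B0 ω ∧ ENNReal.ofReal y' ≤ D0 ω}).toReal| ≤
          L * |y - y'|)
    (z g : ℝ → ℝ) (hznn : ∀ t, 0 ≤ z t) (hgnn : ∀ t, 0 ≤ g t)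
    (hzc : ContinuousOn z (Set.Icc 0 (1 / (2 * (z₀ * L + 4 * l)))))
    (hgc : ContinuousOn g (Set.Icc 0 (1 / (2 * (z₀ * L + 4 * l)))))
    (heqz : ∀ t ∈ Set.Icc (0 : ℝ) (1 / (2 * (z₀ * L + 4 * l))),
      z t = z₀ * (μ {ω | ENNReal.ofReal t ≤ B0 ω ∧
            ENNReal.ofReal (∫ u in (0 : ℝ)..t, z u) ≤ D0 ω}).toReal
          + l * ∫ u in (0 : ℝ)..t, z u *
              (μ {ω | ENNReal.ofReal (t - u) ≤ B ω ∧
                ENNReal.ofReal ((∫ v in (0 : ℝ)..t, z v)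
                  - ∫ v in (0 : ℝ)..u, z v) ≤ D ω}).toReal)
    (heqg : ∀ t ∈ Set.Icc (0 : ℝ) (1 / (2 * (z₀ * L + 4 * l))),
      g t = z₀ * (μ {ω | ENNReal.ofReal t ≤ B0 ω ∧
            ENNReal.ofReal (∫ u in (0 : ℝ)..t, g u) ≤ D0 ω}).toReal
          + l * ∫ u in (0 : ℝ)..t, g u *
              (μ {ω | ENNReal.ofReal (t - u) ≤ B ω ∧
                ENNReal.ofReal ((∫ v in (0 : ℝ)..t, g v)
                  - ∫ v in (0 : ℝ)..u, g v) ≤ D ω}).toReal) :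
    ∀ t ∈ Set.Icc (0 : ℝ) (1 / (2 * (z₀ * L + 4 * l))), z t = g t := by
  set a := 1 / (2 * (z₀ * L + 4 * l))
  have ha : 0 < a := by positivity
  obtain ⟨w, hw, hwmax⟩ := isCompact_Icc.exists_isMaxOn (nonempty_Icc.2 ha.le) (hzc.sub hgc).abs
  set ε := |z w - g w|
  have hmax : ∀ x ∈ Icc 0 a, |z x - g x| ≤ ε := fun x hx => hwmax hx
  have hprim : ∀ x ∈ Icc 0 w, |(∫ v in 0..x, z v) - ∫ v in 0..x, g v| ≤ a * ε := fun x hx => by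
    have hxa : Icc 0 x ⊆ Icc 0 a := Icc_subset_Icc le_rfl (hx.2.trans hw.2)
    rw [← intervalIntegral.integral_sub ((hzc.mono hxa).intervalIntegrable_of_Icc hx.1)
      ((hgc.mono hxa).intervalIntegrable_of_Icc hx.1)]
    refine (intervalIntegral.norm_integral_le_of_norm_le_const (f := fun v => z v - g v) fun y hy =>
      hmax y (hxa (Ioc_subset_Icc_self (uIoc_of_le hx.1 ▸ hy)))).trans ?_
    rw [sub_zero, abs_of_nonneg hx.1, mul_comm]
    exact mul_le_mul_of_nonneg_right (hx.2.trans hw.2) (abs_nonneg _)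
  have hw_sub : Icc 0 w ⊆ Icc 0 a := Icc_subset_Icc le_rfl hw.2
  have hε : ε ≤ (z₀ * L + 4 * l) * (a * ε) := by
    have hfluid : ε = |fluidRHS μ B0 D0 B D z₀ l z w - fluidRHS μ B0 D0 B D z₀ l g w| :=
      congrArg (fun x => |x|) (congrArg₂ (· - ·) (heqz w hw) (heqg w hw))
    exact hfluid.le.trans <| abs_fluidRHS_sub_le hz₀.le hl.le hL hLip hw.1 (hzc.mono hw_sub)
      (hgc.mono hw_sub) (fun x _ => hznn x) (fun x _ => hgnn x) hprim
  have hKa : (z₀ * L + 4 * l) * (a * ε) = ε / 2 := by simp only [a]; field_simp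
  intro t ht
  have hε0 : ε ≤ 0 := by linarith
  exact sub_eq_zero.1 (abs_nonpos_iff.1 ((hmax t ht).trans hε0))
end
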